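/- arXiv:2008.06852 — 2 statements merged into one kernel-verified Lean document; each statement's English description precedes it below -/
import Mathlib

section
/- Let S be a finite EI-Ehresmann semigroup. Then every idempotent f ∈ S is Green's J-equivalent to the projection f*·f⁺ ∈ E. Consequently, every regular element of S is Green's J-equivalent to some element of E; that is, every regular J-class of S contains a projection. -/
def LtRel {S : Type*} [Semigroup S] (E : Set S) (a b : S) : Prop :=
  ∀ e ∈ E, (a * e = a ↔ b * e = b)

def RtRel {S : Type*} [Semigroup S] (E : Set S) (a b : S) : Prop :=
  ∀ e ∈ E, (e * a = a ↔ e * b = b)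

def HtRel {S : Type*} [Semigroup S] (E : Set S) (a b : S) : Prop :=
  LtRel E a b ∧ RtRel E a b

/-- An `E`-Ehresmann structure on a semigroup `S`: `E` is a subsemilattice
(commutative set of idempotents closed under multiplication), every `Lt`-class
and every `Rt`-class contains exactly one element of `E` (denoted `star a` and
`plus a` respectively), `Lt` is a right congruence and `Rt` is a left congruence
(expressed by the identities `(ab)* = (a*b)*` and `(ab)⁺ = (ab⁺)⁺`). -/
structure Ehresmann (S : Type*) [Semigroup S] (E : Set S) where
  star : S → S
  plus : S → S
  idem : ∀ e ∈ E, e * e = e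
  comm : ∀ e ∈ E, ∀ f ∈ E, e * f = f * e
  mul_mem : ∀ e ∈ E, ∀ f ∈ E, e * f ∈ E
  star_mem : ∀ a : S, star a ∈ E
  star_lt : ∀ a : S, LtRel E a (star a)
  star_unique : ∀ a : S, ∀ f ∈ E, LtRel E a f → f = star a
  plus_mem : ∀ a : S, plus a ∈ E
  plus_rt : ∀ a : S, RtRel E a (plus a)
  plus_unique : ∀ a : S, ∀ f ∈ E, RtRel E a f → f = plus a
  star_congr : ∀ a b : S, star (a * b) = star (star a * b)
  plus_congr : ∀ a b : S, plus (a * b) = plus (a * plus b)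

def RightRestriction {S : Type*} [Semigroup S] {E : Set S} (M : Ehresmann S E) : Prop :=
  ∀ e ∈ E, ∀ a : S, e * a = a * M.star (e * a)

def LeftRestriction {S : Type*} [Semigroup S] {E : Set S} (M : Ehresmann S E) : Prop :=
  ∀ e ∈ E, ∀ a : S, a * e = M.plus (a * e) * a

/-- A subset `G` of a semigroup is a group under the semigroup multiplication. -/
def IsGroupSubset {S : Type*} [Semigroup S] (G : Set S) : Prop :=
  (∀ a ∈ G, ∀ b ∈ G, a * b ∈ G) ∧
  ∃ u ∈ G, (∀ a ∈ G, u * a = a ∧ a * u = a) ∧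
    (∀ a ∈ G, ∃ b ∈ G, a * b = u ∧ b * a = u)

/-- `S` is EI-Ehresmann (w.r.t. `E`) when every `Ht`-class of a projection is a group. -/
def EIEhresmann {S : Type*} [Semigroup S] (E : Set S) : Prop :=
  ∀ e ∈ E, IsGroupSubset {a : S | HtRel E a e}

def SandwichSet {S : Type*} [Semigroup S] (f₁ f₂ : S) : Set S :=
  {h : S | h * h = h ∧ f₂ * h * f₁ = h ∧ f₁ * h * f₂ = f₁ * f₂}

def GreenR {S : Type*} [Semigroup S] (a b : S) : Prop :=
  insert a {x : S | ∃ s, a * s = x} = insert b {x : S | ∃ s, b * s = x}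

def GreenL {S : Type*} [Semigroup S] (a b : S) : Prop :=
  insert a {x : S | ∃ s, s * a = x} = insert b {x : S | ∃ s, s * b = x}

def GreenJ {S : Type*} [Semigroup S] (a b : S) : Prop :=
  insert a ({x : S | ∃ s, a * s = x} ∪ {x : S | ∃ s, s * a = x} ∪
      {x : S | ∃ s t, s * a * t = x}) =
  insert b ({x : S | ∃ s, b * s = x} ∪ {x : S | ∃ s, s * b = x} ∪
      {x : S | ∃ s t, s * b * t = x})


lemma jsub {S : Type*} [Semigroup S] {a b : S} (h : ∃ s t, s * b * t = a) :
    insert a ({x : S | ∃ s, a * s = x} ∪ {x : S | ∃ s, s * a = x} ∪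
        {x : S | ∃ s t, s * a * t = x}) ⊆
    insert b ({x : S | ∃ s, b * s = x} ∪ {x : S | ∃ s, s * b = x} ∪
        {x : S | ∃ s t, s * b * t = x}) := by
  obtain ⟨s, t, rfl⟩ := h
  intro x hx
  simp only [Set.mem_insert_iff, Set.mem_union, Set.mem_setOf_eq] at hx ⊢
  rcases hx with rfl | (⟨w, rfl⟩ | ⟨w, rfl⟩) | ⟨w, w', rfl⟩
  · exact Or.inr (Or.inr ⟨s, t, rfl⟩)
  · exact Or.inr (Or.inr ⟨s, t * w, by simp [mul_assoc]⟩)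
  · exact Or.inr (Or.inr ⟨w * s, t, by simp [mul_assoc]⟩)
  · exact Or.inr (Or.inr ⟨w * s, t * w', by simp [mul_assoc]⟩)

lemma greenJ_of {S : Type*} [Semigroup S] {a b : S} (h1 : ∃ s t, s * b * t = a)
    (h2 : ∃ u v, u * a * v = b) : GreenJ a b :=
  Set.Subset.antisymm (jsub h1) (jsub h2)

lemma star_of_mem {S : Type*} [Semigroup S] {E : Set S} (M : Ehresmann S E)
    {e : S} (he : e ∈ E) : M.star e = e :=
  (M.star_unique e e he (fun _ _ => Iff.rfl)).symm

lemma plus_of_mem {S : Type*} [Semigroup S] {E : Set S} (M : Ehresmann S E)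
    {e : S} (he : e ∈ E) : M.plus e = e :=
  (M.plus_unique e e he (fun _ _ => Iff.rfl)).symm

lemma mul_star_self {S : Type*} [Semigroup S] {E : Set S} (M : Ehresmann S E)
    (a : S) : a * M.star a = a :=
  (M.star_lt a (M.star a) (M.star_mem a)).mpr (M.idem _ (M.star_mem a))

lemma plus_mul_self {S : Type*} [Semigroup S] {E : Set S} (M : Ehresmann S E)
    (a : S) : M.plus a * a = a :=
  (M.plus_rt a (M.plus a) (M.plus_mem a)).mpr (M.idem _ (M.plus_mem a))

lemma idem_greenJ {S : Type*} [Semigroup S] {E : Set S} (M : Ehresmann S E)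
    (hEI : EIEhresmann E) {f : S} (hf : f * f = f) :
    M.star f * M.plus f ∈ E ∧ GreenJ f (M.star f * M.plus f) := by
  set e := M.star f * M.plus f with hedef
  have he : e ∈ E := M.mul_mem _ (M.star_mem f) _ (M.plus_mem f)
  refine ⟨he, ?_⟩
  -- k = f* f f⁺
  set k := M.star f * f * M.plus f with hkdef
  have hsk : M.star k = e := by
    have h1 : M.star (M.star f * f) = M.star f := by
      have := M.star_congr f f
      rw [hf] at this
      exact this.symm
    calc M.star k = M.star (M.star (M.star f * f) * M.plus f) := M.star_congr _ _
      _ = M.star (M.star f * M.plus f) := by rw [h1]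
      _ = e := star_of_mem M he
  have hpk : M.plus k = e := by
    have h1 : M.plus (f * M.plus f) = M.plus f := by
      have := M.plus_congr f f
      rw [hf] at this
      exact this.symm
    calc M.plus k = M.plus (M.star f * (f * M.plus f)) := by rw [hkdef, mul_assoc]
      _ = M.plus (M.star f * M.plus (f * M.plus f)) := M.plus_congr _ _
      _ = M.plus (M.star f * M.plus f) := by rw [h1]
      _ = e := plus_of_mem M he
  have hkHt : HtRel E k e := by
    constructor
    · rw [← hsk]; exact M.star_lt k
    · rw [← hpk]; exact M.plus_rt k
  obtain ⟨_, u, huG, hid, hinv⟩ := hEI e he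
  have heHt : HtRel E e e := ⟨fun _ _ => Iff.rfl, fun _ _ => Iff.rfl⟩
  obtain ⟨k', hk'G, hkk', hk'k⟩ := hinv k hkHt
  have hue : u * e = e := (hid e heHt).1
  have hffs : f * M.star f = f := mul_star_self M f
  have hpff : M.plus f * f = f := plus_mul_self M f
  apply greenJ_of
  · -- f = s * e * t
    refine ⟨f, f, ?_⟩
    calc f * e * f = (f * M.star f) * (M.plus f * f) := by
          rw [hedef]; simp [mul_assoc]
      _ = f * f := by rw [hffs, hpff]
      _ = f := hf
  · -- e = u' * f * v'
    refine ⟨k' * M.star f, M.plus f * e, ?_⟩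
    calc (k' * M.star f) * f * (M.plus f * e) = k' * k * e := by
          rw [hkdef]; simp [mul_assoc]
      _ = u * e := by rw [hk'k]
      _ = e := hue

/-- In a finite EI-Ehresmann semigroup, every idempotent `f` is Green's
`J`-equivalent to the projection `f* f⁺ ∈ E`; consequently every regular element is
`J`-equivalent to some projection. -/
theorem stmt16 {S : Type*} [Semigroup S] [Finite S] (E : Set S) (M : Ehresmann S E)
    (hEI : EIEhresmann E) :
    (∀ f : S, f * f = f →
        M.star f * M.plus f ∈ E ∧ GreenJ f (M.star f * M.plus f)) ∧
    (∀ a : S, (∃ b, a * b * a = a) → ∃ e ∈ E, GreenJ a e) := by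
  constructor
  · exact fun f hf => idem_greenJ M hEI hf
  · rintro a ⟨b, hb⟩
    have hf : (a * b) * (a * b) = a * b := by
      calc (a * b) * (a * b) = (a * b * a) * b := by simp [mul_assoc]
        _ = a * b := by rw [hb]
    obtain ⟨he, hJ⟩ := idem_greenJ M hEI hf
    refine ⟨_, he, ?_⟩
    have haf : GreenJ a (a * b) := by
      apply greenJ_of
      · exact ⟨a * b, a, by rw [show a * b * (a * b) * a = (a*b*a) * (b*a) by
          simp [mul_assoc], hb, show a * (b * a) = a*b*a by simp [mul_assoc], hb]⟩
      · exact ⟨a * b, b, by rw [show a * b * a * b = (a*b*a)*b by simp [mul_assoc], hb]⟩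
    exact haf.trans hJ
end

section
/- Let k be a commutative ring and S a finite right restriction E-Ehresmann semigroup. Let A be the free k-module with basis S, equipped with two bilinear multiplications: the semigroup (convolution) product, extending s·t = st bilinearly, and the category product ⋆, extending s ⋆ t = st if s* = t⁺ and s ⋆ t = 0 otherwise. Then the k-linear map φ : A → A defined on basis elements by φ(s) = Σ_{t ≤ₗ s} t (sum over all t ∈ S with t ≤ₗ s) is bijective and satisfies φ(s·t) = φ(s) ⋆ φ(t) for all s, t ∈ S; hence (A, ·) and (A, ⋆) are isomorphic as (not necessarily unital) k-algebras. -/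
/-- The semigroup (convolution) product on the free `k`-module with basis `S`. -/
noncomputable def convMul {S : Type*} [Semigroup S] {k : Type*} [CommRing k]
    (x y : S →₀ k) : S →₀ k :=
  x.sum fun s a => y.sum fun t b => Finsupp.single (s * t) (a * b)

/-- The product of the associated Ehresmann category, carried by the free `k`-module
with basis `S`: on basis elements, `s ⋆ t = s t` if `s* = t⁺` and `0` otherwise. -/
noncomputable def catMul {S : Type*} [Semigroup S] [DecidableEq S] {E : Set S}
    (M : Ehresmann S E) {k : Type*} [CommRing k] (x y : S →₀ k) : S →₀ k :=
  x.sum fun s a => y.sum fun t b =>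
    if M.star s = M.plus t then Finsupp.single (s * t) (a * b) else 0

/-- The linear map `φ` defined on basis elements by `φ(s) = Σ_{t ≤ₗ s} t`, where
`t ≤ₗ s` means `t = s t*`. -/
noncomputable def phiMap {S : Type*} [Semigroup S] [Fintype S] [DecidableEq S]
    {E : Set S} (M : Ehresmann S E) {k : Type*} [CommRing k] (x : S →₀ k) : S →₀ k :=
  x.sum fun s a =>
    ∑ t ∈ Finset.univ.filter (fun t : S => t = s * M.star t), Finsupp.single t a

/-!
The left order `x ≤ₗ y :↔ x = y x*` is a partial order on the finite set `S`, so `φ` is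
unitriangular with respect to it; hence it is surjective, and a surjective endomorphism of a
finitely generated module over a commutative ring is injective.

For multiplicativity on basis elements, the terms `ab` of `φ(s) ⋆ φ(t)` (with `a ≤ₗ s`,
`b ≤ₗ t`, `a* = b⁺`) are in bijection with the terms `x ≤ₗ st` of `φ(st)`: the inverse sends
`x` to `(s (t x*)⁺, t x*)`. Right restriction is what gives `(s (t x*)⁺)* = (t x*)⁺`.
-/

namespace Ehresmann

variable {S : Type*} [Semigroup S] {E : Set S} (M : Ehresmann S E)

theorem mul_star (a : S) : a * M.star a = a :=
  (M.star_lt a _ (M.star_mem a)).mpr (M.idem _ (M.star_mem a))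

theorem plus_mul (a : S) : M.plus a * a = a :=
  (M.plus_rt a _ (M.plus_mem a)).mpr (M.idem _ (M.plus_mem a))

theorem star_eq_self {e : S} (he : e ∈ E) : M.star e = e :=
  (M.star_unique e e he fun _ _ => Iff.rfl).symm

theorem star_mul_of_mem (a : S) {f : S} (hf : f ∈ E) : M.star (a * f) = M.star a * f := by
  rw [M.star_congr, M.star_eq_self (M.mul_mem _ (M.star_mem a) _ hf)]

theorem star_mul_of_star_eq_plus {a b : S} (hab : M.star a = M.plus b) :
    M.star (a * b) = M.star b := by
  rw [M.star_congr, hab, plus_mul]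

def LeftLE (x y : S) : Prop := x = y * M.star x

variable {M}

theorem leftLE_mul_of_mem (a : S) {f : S} (hf : f ∈ E) : M.LeftLE (a * f) a := by
  rw [LeftLE, M.star_mul_of_mem a hf, ← mul_assoc, mul_star]

theorem LeftLE.star_eq {x y : S} (h : M.LeftLE x y) : M.star x = M.star y * M.star x := by
  conv_lhs => rw [h]
  exact M.star_mul_of_mem y (M.star_mem x)

theorem LeftLE.trans {x y z : S} (hxy : M.LeftLE x y) (hyz : M.LeftLE y z) : M.LeftLE x z := by
  rw [LeftLE, hxy.star_eq, ← mul_assoc, ← hyz, ← hxy]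

theorem LeftLE.antisymm {x y : S} (hxy : M.LeftLE x y) (hyx : M.LeftLE y x) : x = y := by
  have hstar : M.star x = M.star y := by
    rw [hxy.star_eq, M.comm _ (M.star_mem y) _ (M.star_mem x), ← hyx.star_eq]
  rw [hxy, hstar, mul_star]

theorem wellFounded_leftLT [Finite S] : WellFounded fun x y => M.LeftLE x y ∧ x ≠ y :=
  have : IsTrans S fun x y => M.LeftLE x y ∧ x ≠ y :=
    ⟨fun _ _ _ hxy hyz => ⟨hxy.1.trans hyz.1, fun hxz => by
      subst hxz; exact hxy.2 (hxy.1.antisymm hyz.1)⟩⟩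
  have : Std.Irrefl fun x y : S => M.LeftLE x y ∧ x ≠ y := ⟨fun _ h => h.2 rfl⟩
  Finite.wellFounded_of_trans_of_irrefl _

theorem LeftLE.mul {a b s t : S} (ha : M.LeftLE a s) (hb : M.LeftLE b t)
    (hab : M.star a = M.plus b) : M.LeftLE (a * b) (s * t) := by
  calc a * b = s * (M.plus b * b) := by rw [← hab, ← mul_assoc, ← ha]
    _ = s * t * M.star (a * b) := by
      rw [plus_mul, M.star_mul_of_star_eq_plus hab, mul_assoc, ← hb]

theorem LeftLE.mul_plus_mul_star {x s t : S} (hx : M.LeftLE x (s * t)) :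
    s * M.plus (t * M.star x) * (t * M.star x) = x := by
  rw [mul_assoc, plus_mul, ← mul_assoc, ← hx]

theorem LeftLE.star_mul_plus (hRR : RightRestriction M) {x s t : S} (hx : M.LeftLE x (s * t)) :
    M.star (s * M.plus (t * M.star x)) = M.plus (t * M.star x) := by
  rw [M.star_mul_of_mem s (M.plus_mem _)]
  refine (M.plus_rt _ _ (M.star_mem s)).mp ?_
  calc M.star s * (t * M.star x) = t * M.star (M.star s * t) * M.star x := by
        rw [← hRR _ (M.star_mem s), mul_assoc]
    _ = t * M.star x := by rw [← M.star_congr, mul_assoc, ← hx.star_eq]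

end Ehresmann

namespace Finsupp

variable {S T k N : Type*} [Semiring k] [AddCommMonoid N]

def mulLiftAddHom (h : S → T → k →+ N) : (S →₀ k) →+ (T →₀ k) →+ N where
  toFun x :=
    { toFun y := x.sum fun s a => y.sum fun t b => h s t (a * b)
      map_zero' := by simp
      map_add' y y' := by
        rw [← sum_add]
        exact sum_congr fun _ _ => sum_add_index' (fun _ => by rw [mul_zero, map_zero])
          fun _ _ _ => by rw [mul_add, map_add] }
  map_zero' := AddMonoidHom.ext fun _ => by simp
  map_add' x x' := AddMonoidHom.ext fun y => by
    simp only [AddMonoidHom.coe_mk, ZeroHom.coe_mk, AddMonoidHom.add_apply]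
    exact sum_add_index' (fun _ => by simp) fun _ _ _ => by simp only [add_mul, map_add, sum_add]

theorem mulLiftAddHom_single_single (h : S → T → k →+ N) (s : S) (t : T) (a b : k) :
    mulLiftAddHom h (single s a) (single t b) = h s t (a * b) := by
  simp [mulLiftAddHom]

theorem surjective_of_sub_single_mem_span {S k : Type*} [Ring k] {r : S → S → Prop}
    (hr : WellFounded r) (f : (S →₀ k) →ₗ[k] (S →₀ k))
    (hf : ∀ s, f (single s 1) - single s 1 ∈
      Submodule.span k ((fun t => single t 1) '' {t | r t s})) :
    Function.Surjective f := by
  have hsingle (s : S) : single s 1 ∈ LinearMap.range f := by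
    induction s using hr.induction with
    | _ s ih =>
      have hspan : Submodule.span k ((fun t => single t (1 : k)) '' {t | r t s}) ≤
          LinearMap.range f :=
        Submodule.span_le.mpr (by rintro _ ⟨t, ht, rfl⟩; exact ih t ht)
      simpa using sub_mem (LinearMap.mem_range_self f (single s 1)) (hspan (hf s))
  rw [← LinearMap.range_eq_top, eq_top_iff, ← Finsupp.basisSingleOne.span_eq, Submodule.span_le]
  rintro _ ⟨s, rfl⟩
  simpa using hsingle s

end Finsupp

namespace Ehresmann

variable {S : Type*} [Semigroup S] [Fintype S] [DecidableEq S] {E : Set S} (M : Ehresmann S E)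

instance : DecidableRel M.LeftLE := fun _ _ => inferInstanceAs (Decidable (_ = _))

def leftIic (s : S) : Finset S := {t | M.LeftLE t s}

variable {M}

@[simp]
theorem mem_leftIic {s t : S} : t ∈ M.leftIic s ↔ M.LeftLE t s := by
  simp [leftIic]

theorem sum_leftIic_mul (hRR : RightRestriction M) (s t : S) {N : Type*} [AddCommMonoid N]
    (g : S → N) :
    ∑ x ∈ M.leftIic (s * t), g x =
      ∑ p ∈ M.leftIic s ×ˢ M.leftIic t with M.star p.1 = M.plus p.2, g (p.1 * p.2) := by
  symm
  refine Finset.sum_nbij' (fun p => p.1 * p.2) (fun x => (s * M.plus (t * M.star x), t * M.star x))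
    ?_ ?_ ?_ ?_ fun _ _ => rfl
  · rintro ⟨a, b⟩ hab
    simp only [Finset.mem_filter, Finset.mem_product, mem_leftIic] at hab ⊢
    exact hab.1.1.mul hab.1.2 hab.2
  · intro x hx
    simp only [Finset.mem_filter, Finset.mem_product, mem_leftIic] at hx ⊢
    exact ⟨⟨leftLE_mul_of_mem s (M.plus_mem _), leftLE_mul_of_mem t (M.star_mem x)⟩,
      hx.star_mul_plus hRR⟩
  · rintro ⟨a, b⟩ hab
    simp only [Finset.mem_filter, Finset.mem_product, mem_leftIic] at hab
    obtain ⟨⟨ha, hb⟩, hstar⟩ := hab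
    have hb' : t * M.star (a * b) = b := by rw [M.star_mul_of_star_eq_plus hstar, ← hb]
    rw [hb', ← hstar, ← ha]
  · intro x hx
    exact (mem_leftIic.mp hx).mul_plus_mul_star

variable (M) (k : Type*) [CommRing k]

noncomputable def phiLinearMap : (S →₀ k) →ₗ[k] (S →₀ k) :=
  Finsupp.linearCombination k fun s => ∑ t ∈ M.leftIic s, Finsupp.single t 1

theorem phiLinearMap_single (s : S) (a : k) :
    M.phiLinearMap k (Finsupp.single s a) = ∑ t ∈ M.leftIic s, Finsupp.single t a := by
  simp [phiLinearMap, Finset.smul_sum]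

theorem coe_phiLinearMap : ⇑(M.phiLinearMap k) = phiMap M := by
  ext1 x
  rw [phiLinearMap, Finsupp.linearCombination_apply, phiMap]
  simp only [Finset.smul_sum, Finsupp.smul_single, smul_eq_mul, mul_one]
  rfl

theorem bijective_phiLinearMap : Function.Bijective (M.phiLinearMap k) := by
  have hsurj : Function.Surjective (M.phiLinearMap k) := by
    refine Finsupp.surjective_of_sub_single_mem_span M.wellFounded_leftLT _ fun s => ?_
    rw [phiLinearMap_single, ← Finset.add_sum_erase _ _ (mem_leftIic.mpr (mul_star M s).symm),
      add_sub_cancel_left]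
    refine Submodule.sum_mem _ fun t ht => Submodule.subset_span ⟨t, ?_, rfl⟩
    obtain ⟨hne, hle⟩ := Finset.mem_erase.mp ht
    exact ⟨mem_leftIic.mp hle, hne⟩
  exact ⟨OrzechProperty.injective_of_surjective_endomorphism _ hsurj, hsurj⟩

end Ehresmann

theorem convMul_eq_mulLiftAddHom {S k : Type*} [Semigroup S] [CommRing k] (x y : S →₀ k) :
    convMul x y = Finsupp.mulLiftAddHom (fun s t => Finsupp.singleAddHom (s * t)) x y :=
  rfl

theorem catMul_eq_mulLiftAddHom {S k : Type*} [Semigroup S] [DecidableEq S] [CommRing k]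
    {E : Set S} (M : Ehresmann S E) (x y : S →₀ k) :
    catMul M x y = Finsupp.mulLiftAddHom
      (fun s t => if M.star s = M.plus t then Finsupp.singleAddHom (s * t) else 0) x y := by
  simp only [catMul, Finsupp.mulLiftAddHom, AddMonoidHom.coe_mk, ZeroHom.coe_mk]
  exact Finsupp.sum_congr fun _ _ => Finsupp.sum_congr fun _ _ => by split_ifs <;> rfl

theorem phiMap_convMul {S : Type*} [Semigroup S] [Fintype S] [DecidableEq S] {E : Set S}
    {M : Ehresmann S E} {k : Type*} [CommRing k] (hRR : RightRestriction M) (x y : S →₀ k) :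
    phiMap M (convMul x y) = catMul M (phiMap M x) (phiMap M y) := by
  rw [← M.coe_phiLinearMap k, convMul_eq_mulLiftAddHom, catMul_eq_mulLiftAddHom]
  induction x using Finsupp.induction_linear with
  | zero => simp only [map_zero, AddMonoidHom.zero_apply]
  | add x x' hx hx' => simp only [map_add, AddMonoidHom.add_apply, hx, hx']
  | single s a =>
    induction y using Finsupp.induction_linear with
    | zero => simp only [map_zero]
    | add y y' hy hy' => simp only [map_add, hy, hy']
    | single t b =>
      simp only [Finsupp.mulLiftAddHom_single_single, Finsupp.singleAddHom_apply,
        M.phiLinearMap_single, map_sum, AddMonoidHom.finsetSum_apply]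
      rw [M.sum_leftIic_mul hRR, Finset.sum_filter, Finset.sum_product, Finset.sum_comm]
      refine Finset.sum_congr rfl fun _ _ => Finset.sum_congr rfl fun _ _ => ?_
      split_ifs <;> rfl

/-- For a finite right restriction `E`-Ehresmann semigroup `S` and a
commutative ring `k`, the `k`-linear map `φ(s) = Σ_{t ≤ₗ s} t` is bijective and takes
the convolution product to the category product; hence the semigroup algebra and the
category algebra are isomorphic as (not necessarily unital) `k`-algebras. -/
theorem stmt18 {k : Type*} [CommRing k] {S : Type*} [Semigroup S] [Fintype S]
    [DecidableEq S] (E : Set S) (M : Ehresmann S E) (hRR : RightRestriction M) :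
    Function.Bijective (fun x : S →₀ k => phiMap M x) ∧
    (∀ x y : S →₀ k, phiMap M (x + y) = phiMap M x + phiMap M y) ∧
    (∀ (c : k) (x : S →₀ k), phiMap M (c • x) = c • phiMap M x) ∧
    (∀ x y : S →₀ k, phiMap M (convMul x y) = catMul M (phiMap M x) (phiMap M y)) := by
  refine ⟨?_, ?_, ?_, phiMap_convMul hRR⟩ <;> rw [← M.coe_phiLinearMap k]
  exacts [M.bijective_phiLinearMap k, map_add _, map_smul _]
end
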